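/- Let α ∈ ℝ, K > 0, c = √(2K/3), and let m₀ : ℝ → ℝ be smooth with m₀ > 0. Define m(x,t) = m₀(x + ct) and v(x,t) = c · m(x,t)^α. Then (v,m) solves the forward-forward congestion system v_t + (v²/(2m^α) - K m^α)_x = 0 and m_t - (m^{1-α} v)_x = 0 pointwise on ℝ × ℝ. -/

import Mathlib

/-- traveling waves for the forward-forward congestion MFG.
With c = √(2K/3), m(x,t) = m₀(x + ct), v = c m^α, the pair solves
v_t + (v²/(2 m^α) - K m^α)_x = 0 and m_t - (m^{1-α} v)_x = 0 pointwise. -/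
theorem travelingWave_forwardForward (α K : ℝ) (hK : 0 < K)
    (m₀ : ℝ → ℝ) (hsm : ContDiff ℝ (⊤ : ℕ∞) m₀) (hpos : ∀ x, 0 < m₀ x) :
    ∀ x t : ℝ,
      deriv (fun s => Real.sqrt (2 * K / 3) * (m₀ (x + Real.sqrt (2 * K / 3) * s)) ^ α) t
        + deriv (fun y =>
            (Real.sqrt (2 * K / 3) * (m₀ (y + Real.sqrt (2 * K / 3) * t)) ^ α) ^ 2
              / (2 * (m₀ (y + Real.sqrt (2 * K / 3) * t)) ^ α)
            - K * (m₀ (y + Real.sqrt (2 * K / 3) * t)) ^ α) x = 0 ∧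
      deriv (fun s => m₀ (x + Real.sqrt (2 * K / 3) * s)) t
        - deriv (fun y =>
            (m₀ (y + Real.sqrt (2 * K / 3) * t)) ^ (1 - α)
              * (Real.sqrt (2 * K / 3)
                  * (m₀ (y + Real.sqrt (2 * K / 3) * t)) ^ α)) x = 0 := by
  intro x t
  set c := Real.sqrt (2 * K / 3) with hc
  have hc2 : c ^ 2 = 2 * K / 3 := Real.sq_sqrt (by positivity)
  have hd : Differentiable ℝ m₀ := hsm.differentiable (by simp)
  set u := x + c * t with hu
  have hupos := hpos u
  set D := deriv m₀ u with hD
  -- inner functions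
  have hinT : HasDerivAt (fun s : ℝ => x + c * s) c t := by
    simpa using ((hasDerivAt_id t).const_mul c).const_add x
  have hinX : HasDerivAt (fun y : ℝ => y + c * t) 1 x := by
    simpa using (hasDerivAt_id x).add_const (c * t)
  have hmT : HasDerivAt (fun s => m₀ (x + c * s)) (D * c) t :=
    (hd u).hasDerivAt.comp t hinT
  have hmX : HasDerivAt (fun y => m₀ (y + c * t)) (D * 1) x :=
    (hd (x + c * t)).hasDerivAt.comp x hinX
  constructor
  · -- first equation
    have hvT : HasDerivAt (fun s => c * (m₀ (x + c * s)) ^ α)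
        (c * (D * c * α * (m₀ u) ^ (α - 1))) t :=
      (hmT.rpow_const (Or.inl hupos.ne')).const_mul c
    have hfun1 : (fun y =>
        (c * (m₀ (y + c * t)) ^ α) ^ 2 / (2 * (m₀ (y + c * t)) ^ α)
          - K * (m₀ (y + c * t)) ^ α)
        = fun y => (c ^ 2 / 2 - K) * (m₀ (y + c * t)) ^ α := by
      funext y
      have h := Real.rpow_pos_of_pos (hpos (y + c * t)) α
      field_simp
    have hvX : HasDerivAt (fun y =>
        (c * (m₀ (y + c * t)) ^ α) ^ 2 / (2 * (m₀ (y + c * t)) ^ α)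
          - K * (m₀ (y + c * t)) ^ α)
        ((c ^ 2 / 2 - K) * (D * 1 * α * (m₀ u) ^ (α - 1))) x := by
      rw [hfun1]
      exact (hmX.rpow_const (Or.inl hupos.ne')).const_mul _
    rw [hvT.deriv, hvX.deriv]
    linear_combination (3 / 2 * D * α * (m₀ u) ^ (α - 1)) * hc2
  · -- second equation
    have hfun2 : (fun y =>
        (m₀ (y + c * t)) ^ (1 - α) * (c * (m₀ (y + c * t)) ^ α))
        = fun y => c * m₀ (y + c * t) := by
      funext y
      have h := hpos (y + c * t)
      have hm : (m₀ (y + c * t)) ^ (1 - α) * (m₀ (y + c * t)) ^ α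
          = m₀ (y + c * t) := by
        rw [← Real.rpow_add h, show (1 : ℝ) - α + α = 1 by ring, Real.rpow_one]
      calc (m₀ (y + c * t)) ^ (1 - α) * (c * (m₀ (y + c * t)) ^ α)
          = c * ((m₀ (y + c * t)) ^ (1 - α) * (m₀ (y + c * t)) ^ α) := by ring
        _ = c * m₀ (y + c * t) := by rw [hm]
    have hfX : HasDerivAt (fun y =>
        (m₀ (y + c * t)) ^ (1 - α) * (c * (m₀ (y + c * t)) ^ α))
        (c * (D * 1)) x := by
      rw [hfun2]
      exact hmX.const_mul c
    rw [hmT.deriv, hfX.deriv]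
    ring
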